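/- Let μ be a compactly supported Borel probability measure on ℝ^ν and P ⊂ ℝ^ν a set such that {e_λ : λ ∈ P} is orthonormal in L²(μ). Then {e_λ : λ ∈ P} is an orthonormal basis for L²(μ) if and only if Q(t) := Σ_{λ∈P} |μ̂(t−λ)|² equals 1 for all t ∈ ℝ^ν. -/

import Mathlib

open MeasureTheory RealInnerProductSpace

/-- Fourier transform `μ̂(t) = ∫ e^{2πi t·x} dμ(x)` of a measure on `ℝ^ν`. -/
noncomputable def muHat {ν : ℕ} (μ : Measure (EuclideanSpace ℝ (Fin ν)))
    (t : EuclideanSpace ℝ (Fin ν)) : ℂ :=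
  ∫ x, Complex.exp ((((2 : ℝ) * Real.pi * ⟪t, x⟫ : ℝ) : ℂ) * Complex.I) ∂μ

/-!
The exponentials `e_t` span a dense subspace of `L²(μ)`: restricted to the compact support they
form a star subalgebra of `C(K, ℂ)` (`e_s e_t = e_{s+t}`, `conj e_t = e_{-t}`) separating points,
so Stone–Weierstrass applies, and bounded continuous functions are dense in `L²(μ)`.
Since `⟪e_λ, e_t⟫ = μ̂(t - λ)` and `‖e_t‖ = 1`, the identity `Q(t) = 1` is Parseval's identity
for the vector `e_t`. Parseval holds for every vector when the family `{e_λ}` is complete.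
Conversely, Bessel's inequality for the orthogonal projection of `e_t` onto the closed span of
`{e_λ}` shows that equality forces `e_t` into that closed span; as the `e_t` span a dense
subspace, the family is complete.
-/

open Submodule Set ComplexConjugate Real FourierTransform
open scoped BoundedContinuousFunction ENNReal

section Hilbert

variable {𝕜 E ι κ : Type*} [RCLike 𝕜] [NormedAddCommGroup E] [InnerProductSpace 𝕜 E]

local notation "⟪" x ", " y "⟫" => inner 𝕜 x y

theorem Submodule.mem_orthogonal_span_iff {s : Set E} {x : E} :
    x ∈ (span 𝕜 s)ᗮ ↔ ∀ u ∈ s, ⟪u, x⟫ = 0 := by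
  rw [← span_singleton_le_iff_mem, ← isOrtho_iff_le, isOrtho_comm, isOrtho_span]
  simp

variable [CompleteSpace E] {v : ι → E}

theorem Orthonormal.tsum_norm_inner_sq_eq_of_orthogonal_eq_bot (hv : Orthonormal 𝕜 v)
    (hsp : (span 𝕜 (range v))ᗮ = ⊥) (x : E) : ∑' i, ‖⟪v i, x⟫‖ ^ 2 = ‖x‖ ^ 2 := by
  let b := HilbertBasis.mkOfOrthogonalEqBot hv hsp
  have h := lp.norm_rpow_eq_tsum (p := 2) (by norm_num) (b.repr x)
  simp only [ENNReal.toReal_ofNat, Real.rpow_two, LinearIsometryEquiv.norm_map,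
    b.repr_apply_apply, b, HilbertBasis.coe_mkOfOrthogonalEqBot] at h
  exact h.symm

theorem Orthonormal.mem_topologicalClosure_span_of_tsum_norm_inner_sq_eq (hv : Orthonormal 𝕜 v)
    {x : E} (hx : ∑' i, ‖⟪v i, x⟫‖ ^ 2 = ‖x‖ ^ 2) :
    x ∈ (span 𝕜 (range v)).topologicalClosure := by
  set U := (span 𝕜 (range v)).topologicalClosure
  have hvU (i : ι) : v i ∈ U := le_topologicalClosure _ (subset_span (mem_range_self i))
  have hinner (i : ι) : ⟪v i, U.starProjection x⟫ = ⟪v i, x⟫ := by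
    rw [← inner_starProjection_left_eq_right, U.starProjection_eq_self_iff.mpr (hvU i)]
  have hbessel := hv.tsum_inner_products_le (U.starProjection x)
  simp only [hinner, hx] at hbessel
  rw [U.mem_iff_norm_starProjection]
  exact le_antisymm (U.norm_starProjection_apply_le x)
    ((pow_le_pow_iff_left₀ (norm_nonneg _) (norm_nonneg _) two_ne_zero).mp hbessel)

theorem Orthonormal.orthogonal_span_eq_bot_iff_of_dense (hv : Orthonormal 𝕜 v) {w : κ → E}
    (hw : (span 𝕜 (range w)).topologicalClosure = ⊤) :
    (span 𝕜 (range v))ᗮ = ⊥ ↔ ∀ k, ∑' i, ‖⟪v i, w k⟫‖ ^ 2 = ‖w k‖ ^ 2 := by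
  refine ⟨fun hsp k => hv.tsum_norm_inner_sq_eq_of_orthogonal_eq_bot hsp (w k), fun h => ?_⟩
  rw [← topologicalClosure_eq_top_iff, eq_top_iff, ← hw]
  refine topologicalClosure_minimal _ (span_le.mpr ?_) (isClosed_topologicalClosure _)
  rintro _ ⟨k, rfl⟩
  exact hv.mem_topologicalClosure_span_of_tsum_norm_inner_sq_eq (h k)

end Hilbert

section L2

variable {α 𝕜 ι : Type*} [RCLike 𝕜] [MeasurableSpace α] {μ : Measure α}

theorem MeasureTheory.Lp.inner_toLp_of_ae_eq {u : Lp 𝕜 2 μ} {g f : α → 𝕜} (hug : u =ᵐ[μ] g)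
    (hf : MemLp f 2 μ) : inner 𝕜 u (hf.toLp f) = ∫ x, conj (g x) * f x ∂μ := by
  rw [L2.inner_def]
  refine integral_congr_ae ?_
  filter_upwards [hug, hf.coeFn_toLp] with x hux hfx
  rw [hux, hfx, RCLike.inner_apply, mul_comm]

theorem MeasureTheory.Lp.orthogonal_span_eq_bot_iff {u : ι → Lp 𝕜 2 μ} {g : ι → α → 𝕜}
    (hug : ∀ i, u i =ᵐ[μ] g i) :
    (span 𝕜 (range u))ᗮ = ⊥ ↔
      ∀ f : α → 𝕜, MemLp f 2 μ → (∀ i, ∫ x, conj (g i x) * f x ∂μ = 0) → f =ᵐ[μ] 0 := by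
  simp only [Submodule.eq_bot_iff, mem_orthogonal_span_iff, forall_mem_range]
  constructor
  · intro h f hf hfg
    have := h (hf.toLp f) fun i => by rw [inner_toLp_of_ae_eq (hug i) hf, hfg i]
    exact hf.coeFn_toLp.symm.trans (Lp.eq_zero_iff_ae_eq_zero.mp this)
  · intro h F hF
    rw [Lp.eq_zero_iff_ae_eq_zero]
    refine h F (Lp.memLp F) fun i => ?_
    rw [← hF i, ← inner_toLp_of_ae_eq (hug i) (Lp.memLp F), Lp.toLp_coeFn]

end L2

section Density

variable {X : Type*} [PseudoMetricSpace X] [MeasurableSpace X] [BorelSpace X] {μ : Measure X}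
  [IsFiniteMeasure μ] {p : ℝ≥0∞} [Fact (1 ≤ p)]

theorem BoundedContinuousFunction.topologicalClosure_map_toLp_eq_top (hp : p ≠ ∞) {K : Set X}
    (hKμ : μ Kᶜ = 0) {V : Submodule ℂ (X →ᵇ ℂ)}
    (hV : ∀ g : X →ᵇ ℂ, ∀ ε > 0, ∃ a ∈ V, ∀ x ∈ K, ‖g x - a x‖ < ε) :
    (V.map (toLp (E := ℂ) p μ ℂ : (X →ᵇ ℂ) →ₗ[ℂ] Lp ℂ p μ)).topologicalClosure = ⊤ := by
  rw [← dense_iff_topologicalClosure_eq_top]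
  refine dense_closure.mp ((Lp.boundedContinuousFunction_dense ℂ μ hp).mono ?_)
  rw [← range_toLp p μ (𝕜 := ℂ)]
  rintro _ ⟨g, rfl⟩
  rw [Metric.mem_closure_iff]
  intro δ hδ
  set C := (measureUnivNNReal μ : ℝ) ^ p.toReal⁻¹
  have hC : 0 ≤ C := by positivity
  obtain ⟨a, haV, hga⟩ := hV g (δ / (C + 1)) (by positivity)
  refine ⟨toLp p μ ℂ a, mem_map_of_mem haV, ?_⟩
  have hK : ∀ᵐ x ∂μ, x ∈ K := mem_ae_iff.mpr hKμ
  have hbound : ‖toLp p μ ℂ (g - a)‖ ≤ C * (δ / (C + 1)) := by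
    refine Lp.norm_le_of_ae_bound (by positivity) ?_
    filter_upwards [coeFn_toLp p μ ℂ (g - a), hK] with x hx hxK
    rw [hx]
    exact (hga x hxK).le
  rw [dist_eq_norm, ContinuousLinearMap.coe_coe, ← map_sub]
  calc _ ≤ C * (δ / (C + 1)) := hbound
    _ < δ := by rw [mul_div_assoc', div_lt_iff₀ (by positivity)]; nlinarith

end Density

section Characters

variable {E : Type*} [NormedAddCommGroup E] [InnerProductSpace ℝ E]

noncomputable def innerFourierChar : AddChar E (E →ᵇ ℂ) where
  toFun t := .ofNormedAddCommGroup (fun x => (𝐞 ⟪t, x⟫ : ℂ)) (by fun_prop) 1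
    fun x => (Circle.norm_coe _).le
  map_zero_eq_one' := by ext; simp
  map_add_eq_mul' s t := by
    ext x
    change (𝐞 ⟪s + t, x⟫ : ℂ) = 𝐞 ⟪s, x⟫ * 𝐞 ⟪t, x⟫
    rw [inner_add_left, AddChar.map_add_eq_mul, Circle.coe_mul]

@[simp]
lemma innerFourierChar_apply (t x : E) : innerFourierChar t x = 𝐞 ⟪t, x⟫ := rfl

lemma star_innerFourierChar (t : E) : star (innerFourierChar t) = innerFourierChar (-t) := by
  ext x
  simp [inner_neg_left, AddChar.map_neg_eq_inv]

lemma conj_fourierChar (r : ℝ) :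
    conj (𝐞 r : ℂ) = Complex.exp (-(((2 * π * r : ℝ) : ℂ) * Complex.I)) := by
  rw [Real.fourierChar_apply, ← Complex.exp_conj, map_mul, Complex.conj_ofReal, Complex.conj_I,
    mul_neg]

lemma fourierChar_half : (𝐞 (1 / 2) : ℂ) = -1 := by
  rw [Real.fourierChar_apply, ← Complex.exp_pi_mul_I]
  push_cast
  ring_nf

lemma exists_innerFourierChar_ne {x y : E} (h : x ≠ y) :
    ∃ t, innerFourierChar t x ≠ innerFourierChar t y := by
  have hxy : ‖x - y‖ ≠ 0 := norm_ne_zero_iff.mpr (sub_ne_zero.mpr h)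
  set t := (2 * ‖x - y‖ ^ 2)⁻¹ • (x - y)
  have ht : ⟪t, x - y⟫ = 1 / 2 := by
    rw [real_inner_smul_left, real_inner_self_eq_norm_sq]
    field_simp
  refine ⟨t, fun heq => ?_⟩
  have h1 : (𝐞 ⟪t, x - y⟫ : ℂ) = 1 := by
    rw [inner_sub_right, AddChar.map_sub_eq_div, Circle.coe_div, div_eq_one_iff_eq (by simp)]
    exact heq
  rw [ht, fourierChar_half] at h1
  norm_num at h1

lemma toSubmodule_adjoin_range_innerFourierChar :
    Subalgebra.toSubmodule (StarAlgebra.adjoin ℂ (range (innerFourierChar (E := E)))).toSubalgebra =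
      span ℂ (range innerFourierChar) := by
  have hstar : star (range (innerFourierChar (E := E))) ⊆ range innerFourierChar := by
    rintro _ ⟨t, ht⟩
    exact ⟨-t, by rw [← star_innerFourierChar, ht, star_star]⟩
  have hmon : range (innerFourierChar (E := E)) =
      (MonoidHom.mrange (innerFourierChar (E := E)).toMonoidHom : Set (E →ᵇ ℂ)) := by
    rw [MonoidHom.coe_mrange, ← Multiplicative.ofAdd.surjective.range_comp]
    rfl
  rw [StarAlgebra.adjoin_eq_span, union_eq_left.mpr hstar, hmon, Submonoid.closure_eq]

theorem exists_mem_span_innerFourierChar_near {K : Set E} (hK : IsCompact K) (g : E →ᵇ ℂ)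
    {ε : ℝ} (hε : 0 < ε) :
    ∃ a ∈ span ℂ (range innerFourierChar), ∀ x ∈ K, ‖g x - a x‖ < ε := by
  have : CompactSpace K := isCompact_iff_compactSpace.mp hK
  let R : (E →ᵇ ℂ) →⋆ₐ[ℂ] C(K, ℂ) :=
    (ContinuousMap.compStarAlgHom' ℂ ℂ ⟨(↑), continuous_subtype_val⟩).comp
      (BoundedContinuousFunction.toContinuousMapStarₐ ℂ)
  let A := (StarAlgebra.adjoin ℂ (range innerFourierChar)).map R
  have hsep : A.SeparatesPoints := by
    rintro ⟨x, hx⟩ ⟨y, hy⟩ hxy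
    obtain ⟨t, ht⟩ := exists_innerFourierChar_ne (Subtype.coe_ne_coe.mpr hxy)
    exact ⟨_, ⟨R (innerFourierChar t), ⟨_, StarAlgebra.subset_adjoin _ _ ⟨t, rfl⟩, rfl⟩, rfl⟩, ht⟩
  have hg : R g ∈ A.topologicalClosure := by
    rw [ContinuousMap.starSubalgebra_topologicalClosure_eq_top_of_separatesPoints A hsep]
    trivial
  obtain ⟨_, ⟨a, ha, rfl⟩, hdist⟩ := Metric.mem_closure_iff.mp hg ε hε
  refine ⟨a, toSubmodule_adjoin_range_innerFourierChar (E := E) ▸ ha, fun x hx => ?_⟩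
  rw [← dist_eq_norm]
  exact (ContinuousMap.dist_apply_le_dist (f := R g) (g := R a) ⟨x, hx⟩).trans_lt hdist

variable [MeasurableSpace E] [BorelSpace E] (μ : Measure E) [IsFiniteMeasure μ]

noncomputable def innerFourierCharLp (t : E) : Lp ℂ 2 μ :=
  BoundedContinuousFunction.toLp 2 μ ℂ (innerFourierChar t)

lemma coeFn_innerFourierCharLp (t : E) : innerFourierCharLp μ t =ᵐ[μ] fun x => (𝐞 ⟪t, x⟫ : ℂ) :=
  BoundedContinuousFunction.coeFn_toLp 2 μ ℂ _

lemma inner_innerFourierCharLp (s t : E) :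
    inner ℂ (innerFourierCharLp μ s) (innerFourierCharLp μ t) = ∫ x, (𝐞 ⟪t - s, x⟫ : ℂ) ∂μ := by
  rw [innerFourierCharLp, innerFourierCharLp, BoundedContinuousFunction.inner_toLp]
  simp [inner_sub_left, AddChar.map_sub_eq_div, AddChar.map_neg_eq_inv, div_eq_mul_inv]

theorem topologicalClosure_span_innerFourierCharLp_eq_top {K : Set E} (hK : IsCompact K)
    (hKμ : μ Kᶜ = 0) : (span ℂ (range (innerFourierCharLp μ))).topologicalClosure = ⊤ := by
  have := BoundedContinuousFunction.topologicalClosure_map_toLp_eq_top (p := 2)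
    ENNReal.ofNat_ne_top hKμ
    fun g _ hε => exists_mem_span_innerFourierChar_near hK g hε
  rwa [map_span, ← range_comp] at this

lemma norm_innerFourierCharLp (μ : Measure E) [IsProbabilityMeasure μ] (t : E) :
    ‖innerFourierCharLp μ t‖ = 1 := by
  rw [norm_eq_sqrt_re_inner (𝕜 := ℂ), inner_innerFourierCharLp]
  simp

end Characters

lemma inner_innerFourierCharLp_eq_muHat {ν : ℕ} (μ : Measure (EuclideanSpace ℝ (Fin ν)))
    [IsFiniteMeasure μ] (s t : EuclideanSpace ℝ (Fin ν)) :
    inner ℂ (innerFourierCharLp μ s) (innerFourierCharLp μ t) = muHat μ (t - s) :=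
  inner_innerFourierCharLp μ s t

lemma muHat_zero {ν : ℕ} (μ : Measure (EuclideanSpace ℝ (Fin ν))) [IsProbabilityMeasure μ] :
    muHat μ 0 = 1 := by
  simp [muHat]

theorem orthonormal_basis_iff_Q_eq_one {ν : ℕ}
    (μ : Measure (EuclideanSpace ℝ (Fin ν))) [IsProbabilityMeasure μ]
    (K : Set (EuclideanSpace ℝ (Fin ν))) (hK : IsCompact K) (hKμ : μ Kᶜ = 0)
    (P : Set (EuclideanSpace ℝ (Fin ν)))
    (horth : ∀ lam ∈ P, ∀ lam' ∈ P, lam ≠ lam' → muHat μ (lam' - lam) = 0) :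
    (∀ f : EuclideanSpace ℝ (Fin ν) → ℂ, MemLp f 2 μ →
      (∀ lam ∈ P,
        ∫ x, Complex.exp (-((((2 : ℝ) * Real.pi * ⟪lam, x⟫ : ℝ) : ℂ) * Complex.I)) * f x ∂μ = 0) →
      f =ᵐ[μ] 0)
    ↔ (∀ t : EuclideanSpace ℝ (Fin ν), ∑' lam : P, ‖muHat μ (t - (lam : _))‖ ^ 2 = 1) := by
  have hv : Orthonormal ℂ fun lam : P => innerFourierCharLp μ lam := by
    rw [orthonormal_iff_ite]
    intro lam lam'
    rw [inner_innerFourierCharLp_eq_muHat]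
    split_ifs with h
    · rw [h, sub_self, muHat_zero]
    · exact horth lam lam.2 lam' lam'.2 fun h' => h (Subtype.ext h')
  have hL := Lp.orthogonal_span_eq_bot_iff (u := fun lam : P => innerFourierCharLp μ lam)
    fun lam => coeFn_innerFourierCharLp μ lam
  simp only [conj_fourierChar, Subtype.forall] at hL
  rw [← hL, hv.orthogonal_span_eq_bot_iff_of_dense
    (topologicalClosure_span_innerFourierCharLp_eq_top μ hK hKμ)]
  simp [inner_innerFourierCharLp_eq_muHat, norm_innerFourierCharLp]
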